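/- arXiv:1307.5471 — 4 statements merged into one kernel-verified Lean document; each statement's English description precedes it below -/
import Mathlib

section
/- Let Γ be a group acting on an abelian group M by group automorphisms, let A be a finite subset of M, and define φ(F) = rank(⟨F⁻¹A⟩) for finite subsets F of Γ, where ⟨S⟩ denotes the subgroup generated by S and F⁻¹A = {s⁻¹a : s ∈ F, a ∈ A}. Then φ(F₁ ∪ F₂) + φ(F₁ ∩ F₂) ≤ φ(F₁) + φ(F₂) for all finite subsets F₁, F₂ of Γ (with φ(∅) = 0). -/
/-!
Tensoring with `ℚ` over `ℤ` is localization at the nonzero integers, so `rank(ℚ ⊗ N)` is the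
`ℤ`-rank of `N`. The set `(F₁ ∪ F₂)⁻¹A` is `F₁⁻¹A ∪ F₂⁻¹A`, so its closure is the sum of the
closures `H₁ ⊔ H₂`, while the closure of `(F₁ ∩ F₂)⁻¹A` lies in `H₁ ⊓ H₂`. The inequality is then
the modularity of rank, `rank(H₁ ⊔ H₂) + rank(H₁ ⊓ H₂) = rank H₁ + rank H₂`, which holds over any
domain by rank–nullity.
-/

open TensorProduct

universe u v w

theorem IsFractionRing.rank_tensorProduct (R : Type u) (K : Type v) [CommRing R] [CommRing K]
    [Algebra R K] [IsFractionRing R K] (N : Type w) [AddCommGroup N] [Module R N] :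
    Module.rank K (K ⊗[R] N) = Cardinal.lift.{v} (Module.rank R N) := by
  rw [IsLocalization.rank_eq K (nonZeroDivisors R) le_rfl]
  have h := IsLocalizedModule.lift_rank_eq (nonZeroDivisors R) (TensorProduct.mk R K N 1) le_rfl
  rwa [Cardinal.lift_id', Cardinal.lift_umax] at h

namespace AddSubgroup

variable {M : Type*} [AddCommGroup M]

theorem rank_mono {H K : AddSubgroup M} (h : H ≤ K) : Module.rank ℤ H ≤ Module.rank ℤ K :=
  Submodule.rank_mono (toIntSubmodule.monotone h)

theorem rank_sup_add_rank_inf_eq (H K : AddSubgroup M) :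
    Module.rank ℤ ↥(H ⊔ K) + Module.rank ℤ ↥(H ⊓ K) = Module.rank ℤ H + Module.rank ℤ K := by
  have h := Submodule.rank_sup_add_rank_inf_eq (toIntSubmodule H) (toIntSubmodule K)
  rwa [← OrderIso.map_sup, ← OrderIso.map_inf] at h

theorem rank_closure_union_add_rank_closure_le {s t u : Set M} (hu : u ⊆ s ∩ t) :
    Module.rank ℤ (closure (s ∪ t)) + Module.rank ℤ (closure u) ≤
      Module.rank ℤ (closure s) + Module.rank ℤ (closure t) := by
  have hle : closure u ≤ closure s ⊓ closure t :=
    le_inf (closure_mono fun _ hx ↦ (hu hx).1) (closure_mono fun _ hx ↦ (hu hx).2)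
  rw [closure_union]
  exact (add_le_add le_rfl (rank_mono hle)).trans_eq (rank_sup_add_rank_inf_eq _ _)

end AddSubgroup

/-- For a group `Γ` acting on an abelian group `M` by automorphisms, a finite `A ⊆ M`,
and `φ(F) = rank⟨F⁻¹A⟩`, one has `φ(F₁ ∪ F₂) + φ(F₁ ∩ F₂) ≤ φ(F₁) + φ(F₂)`. -/
theorem rank_union_add_rank_inter_le {Γ M : Type*} [Group Γ] [DecidableEq Γ]
    [AddCommGroup M] [DistribMulAction Γ M] (A : Finset M) (F₁ F₂ : Finset Γ) :
    Module.rank ℚ (ℚ ⊗[ℤ] (AddSubgroup.closure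
        {x : M | ∃ s ∈ F₁ ∪ F₂, ∃ a ∈ A, x = s⁻¹ • a}))
      + Module.rank ℚ (ℚ ⊗[ℤ] (AddSubgroup.closure
        {x : M | ∃ s ∈ F₁ ∩ F₂, ∃ a ∈ A, x = s⁻¹ • a}))
    ≤ Module.rank ℚ (ℚ ⊗[ℤ] (AddSubgroup.closure
        {x : M | ∃ s ∈ F₁, ∃ a ∈ A, x = s⁻¹ • a}))
      + Module.rank ℚ (ℚ ⊗[ℤ] (AddSubgroup.closure
        {x : M | ∃ s ∈ F₂, ∃ a ∈ A, x = s⁻¹ • a})) := by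
  let S : Finset Γ → Set M := fun F ↦ {x | ∃ s ∈ F, ∃ a ∈ A, x = s⁻¹ • a}
  have union_eq : S (F₁ ∪ F₂) = S F₁ ∪ S F₂ := by
    ext x
    simp only [S, Set.mem_union, Set.mem_ofPred_eq, Finset.mem_union, or_and_right, exists_or]
  have inter_subset : S (F₁ ∩ F₂) ⊆ S F₁ ∩ S F₂ := fun _ ⟨s, hs, a, ha, hx⟩ ↦
    ⟨⟨s, Finset.mem_of_mem_inter_left hs, a, ha, hx⟩,
      ⟨s, Finset.mem_of_mem_inter_right hs, a, ha, hx⟩⟩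
  have h := AddSubgroup.rank_closure_union_add_rank_closure_le inter_subset
  rw [← union_eq] at h
  simpa only [IsFractionRing.rank_tensorProduct, Cardinal.lift_uzero] using h
end

section
/- Let 0 → M₁ → M₂ → M₃ → 0 be a short exact sequence of modules over the integral group ring ℤΓ of a group Γ, with π : M₂ → M₃ the surjection. Let A₁ be a finite subset of M₁ (viewed inside M₂), A₃' a finite subset of M₂, A₃ = π(A₃'), and A₂ = A₁ ∪ A₃'. Then for every finite subset F of Γ, rank(⟨F⁻¹A₂⟩) ≥ rank(⟨F⁻¹A₁⟩) + rank(⟨F⁻¹A₃⟩), where ⟨S⟩ denotes the subgroup generated by S and rank is the torsion-free rank of an abelian group. -/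
open TensorProduct

/-!
The map `π` sends `⟨F⁻¹A₂⟩` onto a subgroup containing `⟨F⁻¹A₃⟩`, and `ι` embeds `⟨F⁻¹A₁⟩`
into the kernel of this restriction of `π`. Since `ℚ` is a localization of `ℤ`, the rank of
`ℚ ⊗ G` is the `ℤ`-rank of `G`, so rank-nullity over `ℤ` gives the inequality.
-/

theorem rank_add_rank_le_of_injective_of_surjective {R : Type*} {M₁ M₂ M₃ : Type v} [Ring R]
    [HasRankNullity.{v} R] [AddCommGroup M₁] [AddCommGroup M₂] [AddCommGroup M₃]
    [Module R M₁] [Module R M₂] [Module R M₃] {f : M₁ →ₗ[R] M₂} {g : M₂ →ₗ[R] M₃}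
    (hf : Function.Injective f) (hg : Function.Surjective g) (hgf : g ∘ₗ f = 0) :
    Module.rank R M₁ + Module.rank R M₃ ≤ Module.rank R M₂ := by
  have hfg : LinearMap.range f ≤ LinearMap.ker g := LinearMap.range_le_ker_iff.mpr hgf
  calc Module.rank R M₁ + Module.rank R M₃
      = Module.rank R (LinearMap.range f) + Module.rank R M₃ := by
        rw [rank_range_of_injective f hf]
    _ ≤ Module.rank R (LinearMap.ker g) + Module.rank R M₃ := by
        gcongr; exact Submodule.rank_mono hfg
    _ = Module.rank R M₂ := by rw [LinearMap.rank_eq_of_surjective hg, add_comm]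

theorem rank_rat_tensor_eq (G : Type*) [AddCommGroup G] :
    Module.rank ℚ (ℚ ⊗[ℤ] G) = Module.rank ℤ G :=
  (TensorProduct.isBaseChange ℤ G ℚ).rank_eq

namespace AddSubgroup

theorem rank_le_of_le {G : Type*} [AddCommGroup G] {H K : AddSubgroup G} (h : H ≤ K) :
    Module.rank ℤ H ≤ Module.rank ℤ K :=
  LinearMap.rank_le_of_injective (inclusion h).toIntLinearMap (inclusion_injective h)

theorem rank_add_rank_le {G₁ G₂ G₃ : Type u} [AddCommGroup G₁] [AddCommGroup G₂]
    [AddCommGroup G₃] {f : G₁ →+ G₂} {g : G₂ →+ G₃} (hf : Function.Injective f)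
    (hgf : g.comp f = 0) {H₁ : AddSubgroup G₁} {H₂ : AddSubgroup G₂} {H₃ : AddSubgroup G₃}
    (h₁ : H₁.map f ≤ H₂) (h₃ : H₃ ≤ H₂.map g) :
    Module.rank ℤ H₁ + Module.rank ℤ H₃ ≤ Module.rank ℤ H₂ := by
  let f' : H₁ →+ H₂ := (f.comp H₁.subtype).codRestrict H₂ fun x ↦ h₁ ⟨x, x.2, rfl⟩
  let g' : H₂ →+ H₂.map g := g.addSubgroupMap H₂
  have hf' : Function.Injective f' := fun x y hxy ↦ Subtype.ext (hf congr(($hxy : G₂)))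
  have hg'f' : g'.toIntLinearMap ∘ₗ f'.toIntLinearMap = 0 := by
    ext x
    exact congr($hgf x)
  calc Module.rank ℤ H₁ + Module.rank ℤ H₃
      ≤ Module.rank ℤ H₁ + Module.rank ℤ (H₂.map g) := by gcongr; exact rank_le_of_le h₃
    _ ≤ Module.rank ℤ H₂ :=
      rank_add_rank_le_of_injective_of_surjective hf' (g.addSubgroupMap_surjective H₂) hg'f'

end AddSubgroup

section InvTranslates

variable {Γ M N : Type*} [Group Γ] [AddCommGroup M] [AddCommGroup N]
  [Module (MonoidAlgebra ℤ Γ) M] [Module (MonoidAlgebra ℤ Γ) N]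

def invTranslates (F : Finset Γ) (A : Set M) : Set M :=
  {x | ∃ s ∈ F, ∃ a ∈ A, x = MonoidAlgebra.single s⁻¹ (1 : ℤ) • a}

theorem invTranslates_mono (F : Finset Γ) {A B : Set M} (h : A ⊆ B) :
    invTranslates F A ⊆ invTranslates F B := by
  rintro _ ⟨s, hs, a, ha, rfl⟩
  exact ⟨s, hs, a, h ha, rfl⟩

theorem image_invTranslates (f : M →ₗ[MonoidAlgebra ℤ Γ] N) (F : Finset Γ) (A : Set M) :
    f '' invTranslates F A = invTranslates F (f '' A) := by
  ext x
  constructor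
  · rintro ⟨_, ⟨s, hs, a, ha, rfl⟩, rfl⟩
    exact ⟨s, hs, f a, ⟨a, ha, rfl⟩, map_smul f _ a⟩
  · rintro ⟨s, hs, _, ⟨a, ha, rfl⟩, rfl⟩
    exact ⟨_, ⟨s, hs, a, ha, rfl⟩, map_smul f _ a⟩

theorem map_closure_invTranslates (f : M →ₗ[MonoidAlgebra ℤ Γ] N) (F : Finset Γ) (A : Set M) :
    (AddSubgroup.closure (invTranslates F A)).map f.toAddMonoidHom =
      AddSubgroup.closure (invTranslates F (f '' A)) := by
  rw [AddMonoidHom.map_closure, LinearMap.toAddMonoidHom_coe, image_invTranslates]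

end InvTranslates

theorem rank_ge_of_shortExact_general {Γ : Type*} [Group Γ] {M₁ M₂ M₃ : Type u}
    [AddCommGroup M₁] [AddCommGroup M₂] [AddCommGroup M₃]
    [Module (MonoidAlgebra ℤ Γ) M₁] [Module (MonoidAlgebra ℤ Γ) M₂]
    [Module (MonoidAlgebra ℤ Γ) M₃] [DecidableEq M₂] [DecidableEq M₃]
    (ι : M₁ →ₗ[MonoidAlgebra ℤ Γ] M₂) (π : M₂ →ₗ[MonoidAlgebra ℤ Γ] M₃)
    (hι : Function.Injective ι)
    (hexact : LinearMap.range ι = LinearMap.ker π)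
    (A₁ : Finset M₁) (A₃' : Finset M₂) (F : Finset Γ) :
    Module.rank ℚ (ℚ ⊗[ℤ] (AddSubgroup.closure
        {x : M₂ | ∃ s ∈ F, ∃ a ∈ A₁.image ι ∪ A₃',
          x = (MonoidAlgebra.single s⁻¹ (1 : ℤ)) • a}))
    ≥ Module.rank ℚ (ℚ ⊗[ℤ] (AddSubgroup.closure
        {x : M₁ | ∃ s ∈ F, ∃ a ∈ A₁, x = (MonoidAlgebra.single s⁻¹ (1 : ℤ)) • a}))
      + Module.rank ℚ (ℚ ⊗[ℤ] (AddSubgroup.closure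
        {x : M₃ | ∃ s ∈ F, ∃ a ∈ A₃'.image π,
          x = (MonoidAlgebra.single s⁻¹ (1 : ℤ)) • a})) := by
  let A₂ : Set M₂ := ↑(A₁.image ι ∪ A₃')
  have hπι : π.toAddMonoidHom.comp ι.toAddMonoidHom = 0 :=
    AddMonoidHom.ext fun x ↦ congr($(LinearMap.range_le_ker_iff.mp hexact.le) x)
  have h₁ : (AddSubgroup.closure (invTranslates F ↑A₁)).map ι.toAddMonoidHom ≤
      AddSubgroup.closure (invTranslates F A₂) := by
    rw [map_closure_invTranslates]
    exact AddSubgroup.closure_mono (invTranslates_mono F (by simp [A₂]))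
  have h₃ : AddSubgroup.closure (invTranslates F ↑(A₃'.image π)) ≤
      (AddSubgroup.closure (invTranslates F A₂)).map π.toAddMonoidHom := by
    rw [map_closure_invTranslates, Finset.coe_image]
    exact AddSubgroup.closure_mono (invTranslates_mono F (Set.image_mono (by simp [A₂])))
  rw [ge_iff_le, rank_rat_tensor_eq, rank_rat_tensor_eq, rank_rat_tensor_eq]
  exact AddSubgroup.rank_add_rank_le hι hπι h₁ h₃

/-- For a short exact sequence `0 → M₁ → M₂ → M₃ → 0` of `ℤΓ`-modules, with
`A₁ ⊆ M₁` finite, `A₃' ⊆ M₂` finite, `A₃ = π(A₃')`, `A₂ = A₁ ∪ A₃'`, and any finite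
`F ⊆ Γ`, one has `rank⟨F⁻¹A₂⟩ ≥ rank⟨F⁻¹A₁⟩ + rank⟨F⁻¹A₃⟩`. -/
theorem rank_ge_of_shortExact {Γ : Type*} [Group Γ] {M₁ M₂ M₃ : Type u}
    [AddCommGroup M₁] [AddCommGroup M₂] [AddCommGroup M₃]
    [Module (MonoidAlgebra ℤ Γ) M₁] [Module (MonoidAlgebra ℤ Γ) M₂]
    [Module (MonoidAlgebra ℤ Γ) M₃] [DecidableEq M₂] [DecidableEq M₃]
    (ι : M₁ →ₗ[MonoidAlgebra ℤ Γ] M₂) (π : M₂ →ₗ[MonoidAlgebra ℤ Γ] M₃)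
    (hι : Function.Injective ι) (hπ : Function.Surjective π)
    (hexact : LinearMap.range ι = LinearMap.ker π)
    (A₁ : Finset M₁) (A₃' : Finset M₂) (F : Finset Γ) :
    Module.rank ℚ (ℚ ⊗[ℤ] (AddSubgroup.closure
        {x : M₂ | ∃ s ∈ F, ∃ a ∈ A₁.image ι ∪ A₃',
          x = (MonoidAlgebra.single s⁻¹ (1 : ℤ)) • a}))
    ≥ Module.rank ℚ (ℚ ⊗[ℤ] (AddSubgroup.closure
        {x : M₁ | ∃ s ∈ F, ∃ a ∈ A₁, x = (MonoidAlgebra.single s⁻¹ (1 : ℤ)) • a}))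
      + Module.rank ℚ (ℚ ⊗[ℤ] (AddSubgroup.closure
        {x : M₃ | ∃ s ∈ F, ∃ a ∈ A₃'.image π,
          x = (MonoidAlgebra.single s⁻¹ (1 : ℤ)) • a})) :=
  rank_ge_of_shortExact_general ι π hι hexact A₁ A₃' F
end

section
/- Let Γ be a group, f ∈ M_{m,n}(ℤΓ), and F a finite subset of Γ. Let A ⊆ (ℤΓ)^{1×n} be the set of rows of f, and for a finite set S ⊆ (ℤΓ)^{1×n} let ⟨S⟩ denote the subgroup it generates. Then there is a short exact sequence of abelian groups 0 → ker f* ∩ (ℤ[F])^{m×1} → (ℤ[F])^{m×1} → ⟨A*F⟩ → 0, and hence rank(⟨A*F⟩) = m|F| − rank(ker f* ∩ (ℤ[F])^{m×1}), where f* denotes the adjoint matrix (f*)_{k,j,s} = f_{j,k,s⁻¹} and A*F = {a*s : a ∈ A, s ∈ F}. -/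
/-!
The group `(ℤ[F])^{m×1}` is generated by the vectors `eⱼ s` (`j < m`, `s ∈ F`), and `f*`
sends `eⱼ s` to `aⱼ* s`, where `aⱼ` is the `j`-th row of `f`; hence `f*` maps `(ℤ[F])^{m×1}`
onto `⟨A*F⟩`. The rank identity is rank–nullity for `f*` restricted to the free abelian group
`(ℤ[F])^{m×1}` of rank `m|F|`, since `ℚ ⊗ M` is the localisation of `M` at `ℤ ∖ {0}` and so
`rank_ℚ (ℚ ⊗ M) = rank_ℤ M`.
-/
open TensorProduct

/-- The involution `g ↦ g*` on `ℤΓ`, `(Σ g_s s)* = Σ g_s s⁻¹`. -/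
noncomputable def MonoidAlgebra.star' {Γ : Type*} [Group Γ]
    (g : MonoidAlgebra ℤ Γ) : MonoidAlgebra ℤ Γ :=
  MonoidAlgebra.ofCoeff (Finsupp.mapDomain (fun s => s⁻¹) g.coeff)

/-- `(ℤ[F])^{m×1}`: the subgroup of `(ℤΓ)^{m×1}` of vectors supported in `F`. -/
noncomputable def suppIn {Γ : Type*} [Group Γ] [DecidableEq Γ] (m : ℕ) (F : Finset Γ) :
    AddSubgroup (Fin m → MonoidAlgebra ℤ Γ) where
  carrier := {y | ∀ j, (y j).coeff.support ⊆ F}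
  zero_mem' := by intro j; simp
  add_mem' := by
    intro a b ha hb j
    rw [show (a + b) j = a j + b j from rfl, MonoidAlgebra.coeff_add]
    exact (Finsupp.support_add).trans (Finset.union_subset (ha j) (hb j))
  neg_mem' := by
    intro a ha j
    rw [show (-a) j = -(a j) from rfl, MonoidAlgebra.coeff_neg, Finsupp.support_neg]
    exact ha j

/-- Multiplication by `f*` : `(ℤΓ)^{m×1} → (ℤΓ)^{n×1}`, `y ↦ f* y`. -/
noncomputable def adjMul {Γ : Type*} [Group Γ] {m n : ℕ}
    (f : Matrix (Fin m) (Fin n) (MonoidAlgebra ℤ Γ)) :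
    (Fin m → MonoidAlgebra ℤ Γ) →+ (Fin n → MonoidAlgebra ℤ Γ) :=
  AddMonoidHom.mk' (fun y k => ∑ j : Fin m, MonoidAlgebra.star' (f j k) * y j)
    (by
      intro a b
      funext k
      simp [mul_add, Finset.sum_add_distrib])

theorem rank_rat_tensorProduct (M : Type*) [AddCommGroup M] :
    Module.rank ℚ (ℚ ⊗[ℤ] M) = Module.rank ℤ M := by
  have : IsLocalizedModule (nonZeroDivisors ℤ) (TensorProduct.mk ℤ ℚ M 1) :=
    (isLocalizedModule_iff_isBaseChange _ ℚ _).mpr (TensorProduct.isBaseChange ℤ M ℚ)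
  rw [IsLocalization.rank_eq ℚ (nonZeroDivisors ℤ) le_rfl]
  convert IsLocalizedModule.rank_eq (nonZeroDivisors ℤ) le_rfl (TensorProduct.mk ℤ ℚ M 1)
    using 2
  exact Subsingleton.elim _ _

universe u in
theorem AddSubgroup.rank_map_add_rank_ker_inf {M N : Type u} [AddCommGroup M] [AddCommGroup N]
    (φ : M →+ N) (S : AddSubgroup M) :
    Module.rank ℤ (S.map φ) + Module.rank ℤ ↥(φ.ker ⊓ S) = Module.rank ℤ S := by
  let ψ : S →ₗ[ℤ] N := (φ.comp S.subtype).toIntLinearMap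
  have hrange : (LinearMap.range ψ).toAddSubgroup = S.map φ := by
    show (φ.comp S.subtype).range = _
    rw [AddMonoidHom.range_comp, AddSubgroup.range_subtype]
  let eKer : LinearMap.ker ψ ≃+ ↥(φ.ker ⊓ S) :=
    { toFun := fun y => ⟨y.1.1, y.2, y.1.2⟩
      invFun := fun x => ⟨⟨x.1, x.2.2⟩, x.2.1⟩
      map_add' := fun _ _ => rfl }
  rw [← (AddEquiv.addSubgroupCongr hrange).toIntLinearEquiv.rank_eq,
    ← eKer.toIntLinearEquiv.rank_eq]
  exact LinearMap.rank_range_add_rank_ker ψ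

theorem MonoidAlgebra.sum_coeff_smul_single_one {R M : Type*} [Semiring R]
    (x : MonoidAlgebra R M) :
    ∑ s ∈ x.coeff.support, x.coeff s • MonoidAlgebra.single s (1 : R) = x := by
  conv_rhs => rw [← MonoidAlgebra.sum_coeff_single x]
  simp [Finsupp.sum, MonoidAlgebra.smul_single]

section GroupRing

variable {Γ : Type*} [Group Γ]

theorem adjMul_pi_single {m n : ℕ} (f : Matrix (Fin m) (Fin n) (MonoidAlgebra ℤ Γ)) (j : Fin m)
    (g : MonoidAlgebra ℤ Γ) :
    adjMul f (Pi.single j g) = fun k => MonoidAlgebra.star' (f j k) * g := by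
  funext k
  simp [adjMul, Pi.single_apply]

variable [DecidableEq Γ]

theorem suppIn_eq_closure (m : ℕ) (F : Finset Γ) :
    suppIn m F = AddSubgroup.closure
      {y | ∃ j : Fin m, ∃ s ∈ F, y = Pi.single j (MonoidAlgebra.single s 1)} := by
  apply le_antisymm
  · intro y hy
    have hdecomp : y = ∑ j, ∑ s ∈ (y j).coeff.support,
        (y j).coeff s • Pi.single j (MonoidAlgebra.single s 1) := by
      funext k
      simp only [Finset.sum_apply, Pi.smul_apply, Pi.single_apply, smul_ite, smul_zero,
        Finset.sum_ite_irrel, Finset.sum_const_zero, Finset.sum_ite_eq, Finset.mem_univ, if_true,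
        MonoidAlgebra.sum_coeff_smul_single_one]
    rw [hdecomp]
    refine sum_mem fun j _ => sum_mem fun s hs => zsmul_mem (AddSubgroup.subset_closure ?_) _
    exact ⟨j, s, hy j hs, rfl⟩
  · rw [AddSubgroup.closure_le]
    rintro y ⟨i, s, hs, rfl⟩ j
    rcases eq_or_ne j i with rfl | hji
    · simpa [MonoidAlgebra.coeff_single] using hs
    · simp [hji]

theorem map_adjMul_suppIn {m n : ℕ} (f : Matrix (Fin m) (Fin n) (MonoidAlgebra ℤ Γ))
    (F : Finset Γ) :
    (suppIn m F).map (adjMul f) = AddSubgroup.closure {v | ∃ i : Fin m, ∃ s ∈ F,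
      v = fun k => MonoidAlgebra.star' (f i k) * MonoidAlgebra.single s 1} := by
  rw [suppIn_eq_closure, AddMonoidHom.map_closure]
  congr 1
  ext v
  constructor
  · rintro ⟨_, ⟨i, s, hs, rfl⟩, rfl⟩
    exact ⟨i, s, hs, adjMul_pi_single f i _⟩
  · rintro ⟨i, s, hs, rfl⟩
    exact ⟨_, ⟨i, s, hs, rfl⟩, adjMul_pi_single f i _⟩

def suppInEquivPi (m : ℕ) (F : Finset Γ) :
    suppIn m F ≃+ (Fin m → MonoidAlgebra.supported ℤ ℤ (F : Set Γ)) where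
  toFun y j := ⟨y.1 j, y.2 j⟩
  invFun g := ⟨fun j => (g j).1, fun j => (g j).2⟩
  map_add' _ _ := rfl

theorem rank_suppIn (m : ℕ) (F : Finset Γ) :
    Module.rank ℤ (suppIn m F) = ((m * F.card : ℕ) : Cardinal) := by
  rw [((suppInEquivPi m F).toIntLinearEquiv.trans
    (LinearEquiv.piCongrRight fun _ => MonoidAlgebra.supportedEquivFinsupp (F : Set Γ))).rank_eq,
    rank_fun_eq_lift_mul, rank_finsupp_self]
  simp

end GroupRing

/-- There is a short exact sequence
`0 → ker f* ∩ (ℤ[F])^{m×1} → (ℤ[F])^{m×1} → ⟨A*F⟩ → 0` (i.e. `f*` maps `(ℤ[F])^{m×1}`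
onto `⟨A*F⟩`, with kernel `ker f* ∩ (ℤ[F])^{m×1}`), and hence
`rank⟨A*F⟩ + rank(ker f* ∩ (ℤ[F])^{m×1}) = m|F|`, where `A` is the set of rows of `f`
and `A*F = {a*s : a ∈ A, s ∈ F}`. -/
theorem rank_adjoint_image {Γ : Type*} [Group Γ] [DecidableEq Γ] {m n : ℕ}
    (f : Matrix (Fin m) (Fin n) (MonoidAlgebra ℤ Γ)) (F : Finset Γ) :
    AddSubgroup.map (adjMul f) (suppIn m F)
        = AddSubgroup.closure
            {v : Fin n → MonoidAlgebra ℤ Γ | ∃ i : Fin m, ∃ s ∈ F,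
              v = fun k => MonoidAlgebra.star' (f i k) * MonoidAlgebra.single s 1} ∧
    Module.rank ℚ (ℚ ⊗[ℤ] (AddSubgroup.closure
            {v : Fin n → MonoidAlgebra ℤ Γ | ∃ i : Fin m, ∃ s ∈ F,
              v = fun k => MonoidAlgebra.star' (f i k) * MonoidAlgebra.single s 1}))
        + Module.rank ℚ (ℚ ⊗[ℤ] ↥((adjMul f).ker ⊓ suppIn m F))
      = (m * F.card : ℕ) := by
  have hmap := map_adjMul_suppIn f F
  refine ⟨hmap, ?_⟩
  rw [← hmap, rank_rat_tensorProduct, rank_rat_tensorProduct,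
    AddSubgroup.rank_map_add_rank_ker_inf, rank_suppIn]
end

section
/- Let B be a finite set, M an abelian group, and B ⊆ M a ℤ-linearly independent subset. Then for each λ ∈ [0, 1/2]^B there exists a group homomorphism ι_λ : M → ℝ/ℤ with ι_λ(b) = λ_b + ℤ for all b ∈ B, and the resulting map ι : [0,1/2]^B → Hom(M, ℝ/ℤ) (with the topology of pointwise convergence on the target) can be chosen to be a continuous injection, hence a topological embedding of the cube [0,1/2]^B into the Pontryagin dual of M. -/
/-!
Since `ℚ` is an injective `ℤ`-module, the coordinate functionals of the basis `B` of `span B`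
extend to a `ℤ`-linear map `F : M → ℚ^B`. Then `ι_λ(a) = ∑_b λ_b F(a)_b mod 1` is a character
of `M` that depends continuously (indeed linearly) on `λ` and satisfies `ι_λ(b) = λ_b`. As
`[0, 1/2]` injects into `ℝ/ℤ`, `ι` is injective, and a continuous injection of the compact cube
into the Hausdorff space `(ℝ/ℤ)^M` is an embedding.
-/

open Set

theorem Module.Baer.exists_linearMap_apply_eq {R Q M ι : Type*} [CommRing R] [AddCommGroup Q]
    [Module R Q] [AddCommGroup M] [Module R M] (hQ : Module.Baer R Q) {v : ι → M}
    (hv : LinearIndependent R v) (g : ι → Q) : ∃ f : M →ₗ[R] Q, ∀ i, f (v i) = g i := by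
  obtain ⟨f, hf⟩ := hQ.extension_property _ (Submodule.injective_subtype _)
    ((Module.Basis.span hv).constr R g)
  refine ⟨f, fun i => ?_⟩
  have := LinearMap.congr_fun hf (Module.Basis.span hv i)
  rwa [LinearMap.comp_apply, Module.Basis.constr_basis, Submodule.subtype_apply,
    Module.Basis.span_apply] at this

theorem LinearIndependent.exists_linearMap_rat_apply_eq_single {ι M : Type*} [DecidableEq ι]
    [AddCommGroup M] {v : ι → M} (hv : LinearIndependent ℤ v) :
    ∃ F : M →ₗ[ℤ] (ι → ℚ), ∀ i, F (v i) = Pi.single i 1 :=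
  (Module.Baer.of_divisible _).exists_linearMap_apply_eq hv _

section

variable {ι M : Type*} [Fintype ι] [AddCommGroup M]

noncomputable def coordCharacter (F : M →+ (ι → ℚ)) (t : ι → ℝ) : M →+ AddCircle (1 : ℝ) :=
  (QuotientAddGroup.mk' _).comp <| AddMonoidHom.mk' (fun a => t ⬝ᵥ fun i => (F a i : ℝ))
    fun a b => by simp [← dotProduct_add, Pi.add_def]

@[simp]
theorem coordCharacter_apply (F : M →+ (ι → ℚ)) (t : ι → ℝ) (a : M) :
    coordCharacter F t a = ((t ⬝ᵥ fun i => (F a i : ℝ) : ℝ) : AddCircle (1 : ℝ)) := rfl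

theorem coordCharacter_apply_of_eq_single [DecidableEq ι] {F : M →+ (ι → ℚ)} {a : M} {j : ι}
    (h : F a = Pi.single j 1) (t : ι → ℝ) : coordCharacter F t a = t j := by
  have hcast : (fun i => (F a i : ℝ)) = Pi.single j 1 := by
    ext i; rw [h]; by_cases hi : i = j <;> simp [hi]
  rw [coordCharacter_apply, hcast, dotProduct_single_one]

theorem continuous_coordCharacter (F : M →+ (ι → ℚ)) :
    Continuous fun t : ι → ℝ => ⇑(coordCharacter F t) :=
  continuous_pi fun _ => (AddCircle.continuous_mk' 1).comp <|
    continuous_id.dotProduct continuous_const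

end

theorem AddCircle.injOn_coe_Ico {𝕜 : Type*} [AddCommGroup 𝕜] [LinearOrder 𝕜]
    [IsOrderedAddMonoid 𝕜] [Archimedean 𝕜] {p : 𝕜} [Fact (0 < p)] (a : 𝕜) :
    InjOn ((↑) : 𝕜 → AddCircle p) (Ico a (a + p)) :=
  fun _ hx _ hy h => (AddCircle.coe_eq_coe_iff_of_mem_Ico hx hy).mp h

/-- For a `ℤ`-linearly independent finite subset `B` of an abelian group `M`, there is a
continuous injection `ι` of the cube `[0,1/2]^B` into `Hom(M, ℝ/ℤ)` (with the topology
of pointwise convergence, i.e. the topology of `(ℝ/ℤ)^M`) such that each `ι(λ)` is a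
group homomorphism with `ι(λ)(b) = λ_b + ℤ` for all `b ∈ B`; being a continuous
injection from a compact space into a Hausdorff space, `ι` is a topological embedding
of the cube into the Pontryagin dual of `M`. -/
theorem cube_embeds_into_dual {M : Type*} [AddCommGroup M] (B : Finset M)
    (hB : LinearIndependent ℤ (fun b : B => (b : M))) :
    ∃ ι : (B → Set.Icc (0 : ℝ) (1 / 2)) → (M → AddCircle (1 : ℝ)),
      (∀ lam, ∀ a b : M, ι lam (a + b) = ι lam a + ι lam b) ∧
      (∀ lam (b : B), ι lam (b : M) = ((lam b : ℝ) : AddCircle (1 : ℝ))) ∧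
      Continuous ι ∧ Function.Injective ι ∧ Topology.IsEmbedding ι := by
  classical
  obtain ⟨F, hF⟩ := hB.exists_linearMap_rat_apply_eq_single
  let ι := fun lam : B → Icc (0 : ℝ) (1 / 2) =>
    ⇑(coordCharacter F.toAddMonoidHom fun b => (lam b : ℝ))
  have hcoord : ∀ lam (b : B), ι lam b = (lam b : ℝ) := fun lam b =>
    coordCharacter_apply_of_eq_single (hF b) _
  have hcont : Continuous ι := (continuous_coordCharacter _).comp <|
    continuous_pi fun b => continuous_subtype_val.comp (continuous_apply b)
  have hinj : Function.Injective ι := by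
    intro lam mu h
    funext b
    have hb := congrFun h b
    rw [hcoord, hcoord] at hb
    have hsub : Icc (0 : ℝ) (1 / 2) ⊆ Ico 0 (0 + 1) := Icc_subset_Ico_right (by norm_num)
    exact Subtype.ext <| AddCircle.injOn_coe_Ico 0 (hsub (lam b).2) (hsub (mu b).2) hb
  exact ⟨ι, fun lam => map_add _, hcoord, hcont, hinj, (hcont.isClosedEmbedding hinj).isEmbedding⟩
end
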